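/- Let t ∉ spec(A), let P_L be the orthogonal projection onto L in the inner product q_t(u,v) = ⟨(A−t)u,(A−t)v⟩, and let φ be a unit vector in the span of eigenvectors φ_1,…,φ_j of |A−t| with eigenvalues 𝔡_1(t) ≤ … ≤ 𝔡_j(t). Then ‖φ − P_L φ‖² ≤ (1/𝔡_1(t)²) Σ_{k=1}^j |φ_k − P_L φ_k|_t², where |u|_t = ‖(A−t)u‖. -/

import Mathlib

open scoped InnerProductSpace

variable {H : Type*} [NormedAddCommGroup H] [InnerProductSpace ℂ H] [CompleteSpace H]

/-- `Fapp A L j t` : the `j`-th min-max value of `‖(A-t)u‖/‖u‖` over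
`j`-dimensional subspaces of `L`. -/
noncomputable def Fapp (A : H →L[ℂ] H) (L : Submodule ℂ H) (j : ℕ) (t : ℝ) : ℝ :=
  sInf {r : ℝ | 0 ≤ r ∧ ∃ V : Submodule ℂ H, V ≤ L ∧ Module.finrank ℂ V = j ∧
    ∀ u ∈ V, ‖A u - (t : ℂ) • u‖ ≤ r * ‖u‖}

/-- `dd A j t` : the `j`-th min-max value of `‖(A-t)u‖/‖u‖` over all
`j`-dimensional subspaces of the space. -/
noncomputable def dd (A : H →L[ℂ] H) (j : ℕ) (t : ℝ) : ℝ :=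
  sInf {r : ℝ | 0 ≤ r ∧ ∃ V : Submodule ℂ H, Module.finrank ℂ V = j ∧
    ∀ u ∈ V, ‖A u - (t : ℂ) • u‖ ≤ r * ‖u‖}

/-- `tr 1_{[a,b]}(A) ≥ j` : there is a `j`-dimensional subspace on which the
quadratic form of `(A-a)(A-b)` is non-positive. -/
def countGeIcc (A : H →L[ℂ] H) (a b : ℝ) (j : ℕ) : Prop :=
  ∃ V : Submodule ℂ H, Module.finrank ℂ V = j ∧
    ∀ u ∈ V, (inner ℂ (A u - (a : ℂ) • u) (A u - (b : ℂ) • u) : ℂ).re ≤ 0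

/-- `tr 1_{(a,b]}(A) ≥ j`. -/
def countGeIoc (A : H →L[ℂ] H) (a b : ℝ) (j : ℕ) : Prop :=
  ∃ V : Submodule ℂ H, Module.finrank ℂ V = j ∧
    (∀ u ∈ V, (inner ℂ (A u - (a : ℂ) • u) (A u - (b : ℂ) • u) : ℂ).re ≤ 0) ∧
    V ⊓ LinearMap.ker (((A - (a : ℂ) • (1 : H →L[ℂ] H) : H →L[ℂ] H) : H →ₗ[ℂ] H)) = ⊥

/-- `tr 1_{[a,b)}(A) ≥ j`. -/
def countGeIco (A : H →L[ℂ] H) (a b : ℝ) (j : ℕ) : Prop :=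
  ∃ V : Submodule ℂ H, Module.finrank ℂ V = j ∧
    (∀ u ∈ V, (inner ℂ (A u - (a : ℂ) • u) (A u - (b : ℂ) • u) : ℂ).re ≤ 0) ∧
    V ⊓ LinearMap.ker (((A - (b : ℂ) • (1 : H →L[ℂ] H) : H →L[ℂ] H) : H →ₗ[ℂ] H)) = ⊥

/-- `nminus A j t` : the `j`-th spectral point of `A` to the left of `t`,
counting multiplicities, i.e. `sup {s < t : tr 1_{(s,t]}(A) ≥ j}`. -/
noncomputable def nminus (A : H →L[ℂ] H) (j : ℕ) (t : ℝ) : ℝ :=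
  sSup {s : ℝ | s < t ∧ countGeIoc A s t j}

/-- `nplus A j t` : the `j`-th spectral point of `A` to the right of `t`. -/
noncomputable def nplus (A : H →L[ℂ] H) (j : ℕ) (t : ℝ) : ℝ :=
  sInf {s : ℝ | t < s ∧ countGeIco A t s j}

/-- The real spectrum of `A`. -/
def specRe (A : H →L[ℂ] H) : Set ℝ := {x : ℝ | (x : ℂ) ∈ spectrum ℂ A}

/-!
The residual `e = φ - Pφ` is the image of `φ = ∑ cₖ φₖ` under the linear map `id - P`, so
`(A - t) e = ∑ cₖ (A - t)(φₖ - Pφₖ)` and Cauchy–Schwarz bounds `‖(A - t) e‖²` by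
`(∑ |cₖ|²) ∑ |φₖ - Pφₖ|ₜ²`, where `∑ |cₖ|² = ‖φ‖² = 1` by orthonormality. On the other side,
testing the min-max definition of `𝔡₁(t)` on the line through `e` gives `𝔡₁(t) ‖e‖ ≤ ‖(A - t) e‖`,
and `𝔡₁(t) > 0` because `A - t` is invertible, hence bounded below.
-/

theorem ContinuousLinearMap.exists_pos_mul_norm_le_of_notMem_spectrum {E : Type*}
    [NormedAddCommGroup E] [NormedSpace ℂ E] (A : E →L[ℂ] E) {z : ℂ} (hz : z ∉ spectrum ℂ A) :
    ∃ c > 0, ∀ x, c * ‖x‖ ≤ ‖A x - z • x‖ := by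
  obtain ⟨U, hU⟩ := spectrum.notMem_iff.mp hz
  obtain ⟨c, hc, hcU⟩ := antilipschitzWith_iff_exists_mul_le_norm.mp
    ⟨_, (ContinuousLinearEquiv.unitsEquiv ℂ E U).antilipschitz⟩
  refine ⟨c, hc, fun x => ?_⟩
  simpa [ContinuousLinearEquiv.unitsEquiv_apply, hU, Algebra.algebraMap_eq_smul_one,
    ← norm_neg (A x - z • x)] using hcU x

theorem ContinuousLinearMap.norm_sub_smul_le_of_mem_span_singleton {E : Type*}
    [NormedAddCommGroup E] [NormedSpace ℂ E] (A : E →L[ℂ] E) (z : ℂ) {u : E} (hu : u ≠ 0) :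
    ∀ w ∈ ℂ ∙ u, ‖A w - z • w‖ ≤ ‖A u - z • u‖ / ‖u‖ * ‖w‖ := by
  intro w hw
  obtain ⟨a, rfl⟩ := Submodule.mem_span_singleton.mp hw
  rw [map_smul, smul_comm, ← smul_sub, norm_smul, norm_smul]
  apply le_of_eq
  field_simp [norm_ne_zero_iff.mpr hu]

theorem Orthonormal.sum_norm_sq_eq_norm_sum_sq {𝕜 E ι : Type*} [RCLike 𝕜]
    [NormedAddCommGroup E] [InnerProductSpace 𝕜 E] {v : ι → E} (hv : Orthonormal 𝕜 v)
    (c : ι → 𝕜) (s : Finset ι) :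
    ∑ i ∈ s, ‖c i‖ ^ 2 = ‖∑ i ∈ s, c i • v i‖ ^ 2 := by
  have h := hv.inner_sum c c s
  simp only [inner_self_eq_norm_sq_to_K, RCLike.conj_mul] at h
  exact_mod_cast h.symm

theorem norm_sum_smul_sq_le {𝕜 E ι : Type*} [RCLike 𝕜] [NormedAddCommGroup E]
    [NormedSpace 𝕜 E] (c : ι → 𝕜) (w : ι → E) (s : Finset ι) :
    ‖∑ i ∈ s, c i • w i‖ ^ 2 ≤ (∑ i ∈ s, ‖c i‖ ^ 2) * ∑ i ∈ s, ‖w i‖ ^ 2 :=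
  calc ‖∑ i ∈ s, c i • w i‖ ^ 2 ≤ (∑ i ∈ s, ‖c i‖ * ‖w i‖) ^ 2 := by
        gcongr
        exact (norm_sum_le _ _).trans_eq (by simp only [norm_smul])
    _ ≤ _ := Finset.sum_mul_sq_le_sq_mul_sq _ _ _

section dd

variable {E : Type*} [NormedAddCommGroup E] [InnerProductSpace ℂ E]

theorem dd_one_le_div (A : E →L[ℂ] E) (t : ℝ) {u : E} (hu : u ≠ 0) :
    dd A 1 t ≤ ‖A u - (t : ℂ) • u‖ / ‖u‖ :=
  csInf_le ⟨0, fun _ hr => hr.1⟩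
    ⟨by positivity, ℂ ∙ u, finrank_span_singleton hu,
      A.norm_sub_smul_le_of_mem_span_singleton t hu⟩

theorem dd_one_mul_norm_le (A : E →L[ℂ] E) (t : ℝ) (u : E) :
    dd A 1 t * ‖u‖ ≤ ‖A u - (t : ℂ) • u‖ := by
  rcases eq_or_ne u 0 with rfl | hu
  · simp
  · exact (le_div_iff₀ (norm_pos_iff.mpr hu)).mp (dd_one_le_div A t hu)

theorem le_dd_one [Nontrivial E] (A : E →L[ℂ] E) (t : ℝ) {c : ℝ}
    (hc : ∀ x, c * ‖x‖ ≤ ‖A x - (t : ℂ) • x‖) : c ≤ dd A 1 t := by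
  obtain ⟨u, hu⟩ := exists_ne (0 : E)
  refine le_csInf ⟨_, by positivity, ℂ ∙ u, finrank_span_singleton hu,
    A.norm_sub_smul_le_of_mem_span_singleton t hu⟩ ?_
  rintro r ⟨-, V, hV, hVr⟩
  obtain ⟨v, hvV, hv⟩ := Submodule.exists_mem_ne_zero_of_ne_bot (p := V) (by rintro rfl; simp at hV)
  exact le_of_mul_le_mul_right ((hc v).trans (hVr v hvV)) (norm_pos_iff.mpr hv)

theorem dd_one_pos_of_notMem_spectrum [Nontrivial E] (A : E →L[ℂ] E) {t : ℝ}
    (ht : (t : ℂ) ∉ spectrum ℂ A) : 0 < dd A 1 t := by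
  obtain ⟨c, hc, hcA⟩ := A.exists_pos_mul_norm_le_of_notMem_spectrum ht
  exact hc.trans_le (le_dd_one A t hcA)

end dd

theorem stmt_16_general (A : H →L[ℂ] H)
    (L : Submodule ℂ H) (t : ℝ)
    (ht : (t : ℂ) ∉ spectrum ℂ A)
    (j : ℕ) (φv : Fin j → H) (hφon : Orthonormal ℂ φv)
    (P : H →ₗ[ℂ] H)
    (c : Fin j → ℂ) (φ : H) (hφ : φ = ∑ k, c k • φv k) (hφn : ‖φ‖ = 1) :
    ‖φ - P φ‖ ^ 2 ≤ (1 / dd A 1 t ^ 2) *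
      ∑ k, ‖A (φv k - P (φv k)) - (t : ℂ) • (φv k - P (φv k))‖ ^ 2 := by
  have : Nontrivial H := nontrivial_of_ne φ 0 (by rintro rfl; simp at hφn)
  have hd := dd_one_pos_of_notMem_spectrum A ht
  have hc : ∑ k, ‖c k‖ ^ 2 = 1 := by
    rw [hφon.sum_norm_sq_eq_norm_sum_sq, ← hφ, hφn, one_pow]
  let T : H →ₗ[ℂ] H := (A - (t : ℂ) • 1 : H →L[ℂ] H).toLinearMap ∘ₗ (LinearMap.id - P)
  have hT : ∀ u, T u = A (u - P u) - (t : ℂ) • (u - P u) := fun u => by simp [T]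
  have hTφ : T φ = ∑ k, c k • T (φv k) := by simp only [hφ, map_sum, map_smul]
  rw [one_div_mul_eq_div, le_div_iff₀ (by positivity)]
  calc ‖φ - P φ‖ ^ 2 * dd A 1 t ^ 2 = (dd A 1 t * ‖φ - P φ‖) ^ 2 := by ring
    _ ≤ ‖T φ‖ ^ 2 := by
        gcongr
        rw [hT]
        exact dd_one_mul_norm_le A t _
    _ ≤ (∑ k, ‖c k‖ ^ 2) * ∑ k, ‖T (φv k)‖ ^ 2 := hTφ ▸ norm_sum_smul_sq_le _ _ _
    _ = ∑ k, ‖A (φv k - P (φv k)) - (t : ℂ) • (φv k - P (φv k))‖ ^ 2 := by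
        simp only [hc, one_mul, hT]

/-- if `t ∉ spec(A)`, `P` is the `q_t`-orthogonal projection
onto `L`, and `φ` is a unit vector in the span of orthonormal eigenvectors
`φ_1, …, φ_j` of `|A-t|` with eigenvalues `𝔡_1(t) ≤ … ≤ 𝔡_j(t)`, then
`‖φ - Pφ‖² ≤ (1/𝔡_1(t)²) Σ_{k=1}^j |φ_k - Pφ_k|_t²`. -/
theorem stmt_16 (A : H →L[ℂ] H) (hA : IsSelfAdjoint A)
    (L : Submodule ℂ H) [FiniteDimensional ℂ L] (t : ℝ)
    (ht : (t : ℂ) ∉ spectrum ℂ A)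
    (j : ℕ) (φv : Fin j → H) (hφon : Orthonormal ℂ φv)
    (hφeig : ∀ k : Fin j,
      A (A (φv k) - (t : ℂ) • φv k) - (t : ℂ) • (A (φv k) - (t : ℂ) • φv k) =
        (((dd A (k.1 + 1) t : ℝ) : ℂ) ^ 2) • φv k)
    (P : H →ₗ[ℂ] H) (hPmem : ∀ u : H, P u ∈ L)
    (hPorth : ∀ u : H, ∀ v ∈ L,
      (inner ℂ (A (u - P u) - (t : ℂ) • (u - P u)) (A v - (t : ℂ) • v) : ℂ) = 0)
    (c : Fin j → ℂ) (φ : H) (hφ : φ = ∑ k, c k • φv k) (hφn : ‖φ‖ = 1) :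
    ‖φ - P φ‖ ^ 2 ≤ (1 / dd A 1 t ^ 2) *
      ∑ k, ‖A (φv k - P (φv k)) - (t : ℂ) • (φv k - P (φv k))‖ ^ 2 :=
  stmt_16_general A L t ht j φv hφon P c φ hφ hφn
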